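/- arXiv:1706.08414 — 7 statements merged into one kernel-verified Lean document; each statement's English description precedes it below -/
import Mathlib

section
/- Let H and G be finite simple graphs and let R be a finite simple graph with vertex set V(H). Let σ be an R-connected, H-loop-free partition of V(H). Then the number of homomorphisms from H/σ to G equals the sum, over all R-connected, H-loop-free partitions ρ of V(H) with σ ≤ ρ (i.e., σ refines ρ), of the cardinality of Hom(H/ρ, G)[R]. -/
/-- The quotient graph `H/ρ`: vertices are the blocks of the partition (equivalence
classes of the setoid `ρ`), and two distinct blocks are adjacent iff they contain
adjacent vertices of `H`. -/
def quotientGraph {V : Type} (H : SimpleGraph V) (ρ : Setoid V) :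
    SimpleGraph (Quotient ρ) where
  Adj B B' := B ≠ B' ∧ ∃ u v : V, Quotient.mk ρ u = B ∧ Quotient.mk ρ v = B' ∧ H.Adj u v
  symm := by
    constructor
    rintro B B' ⟨hne, u, v, hu, hv, h⟩
    exact ⟨hne.symm, v, u, hv, hu, h.symm⟩
  loopless := by
    constructor
    rintro B ⟨hne, -⟩
    exact hne rfl

/-- A partition (setoid) `ρ` of `V` is `R`-connected if every block induces a connected
subgraph of `R`. -/
def RConnectedPartition {V : Type} (R : SimpleGraph V) (ρ : Setoid V) : Prop :=
  ∀ v : V, (R.induce {u : V | ρ.r u v}).Connected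

/-- A partition (setoid) `ρ` is `H`-loop-free if no block contains two vertices that are
adjacent in `H`. -/
def LoopFreePartition {V : Type} (H : SimpleGraph V) (ρ : Setoid V) : Prop :=
  ∀ u v : V, ρ.r u v → ¬ H.Adj u v

/-- `Hom(H/ρ, G)[R]`: homomorphisms `φ` from `H/ρ` to `G` such that `φ(B) ≠ φ(B')`
whenever `B, B'` are distinct blocks containing vertices `u ∈ B`, `v ∈ B'` with `{u,v}`
an edge of `R`. -/
def RRestrictedHom {V W : Type} (H : SimpleGraph V) (G : SimpleGraph W) (R : SimpleGraph V)
    (ρ : Setoid V) : Type :=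
  {φ : quotientGraph H ρ →g G //
    ∀ u v : V, R.Adj u v → Quotient.mk ρ u ≠ Quotient.mk ρ v →
      φ (Quotient.mk ρ u) ≠ φ (Quotient.mk ρ v)}

/-!
A homomorphism `φ : H/σ → G` determines a coarsening `ρ` of `σ`: the connected components of
the graph of those `R`-edges whose endpoints `φ` sends to the same vertex. This `ρ` is
`R`-connected by construction, `H`-loop-free because `G` has no loops, and coarser than `σ`
because the blocks of `σ` are `R`-connected; `φ` factors through an `R`-restricted
homomorphism on `H/ρ`. Conversely, an `R`-restricted homomorphism on `H/ρ` is constant on the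
`R`-connected blocks of `ρ` and separates `R`-adjacent blocks, so `ρ` is recovered from its
pullback to `H/σ` in this way. Hence `Hom(H/σ, G)` is in bijection with the disjoint union of
the sets `Hom(H/ρ, G)[R]`.
-/

namespace SimpleGraph

variable {V α : Type*} {R K : SimpleGraph V} {f : V → α} {u v : V}

def monochromatic (R : SimpleGraph V) (f : V → α) : SimpleGraph V where
  Adj u v := R.Adj u v ∧ f u = f v
  symm := ⟨fun _ _ h => ⟨h.1.symm, h.2.symm⟩⟩
  loopless := ⟨fun _ h => R.irrefl h.1⟩

lemma monochromatic_le : R.monochromatic f ≤ R := fun _ _ h => h.1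

lemma Reachable.apply_eq_of_monochromatic (h : (R.monochromatic f).Reachable u v) :
    f u = f v := by
  obtain ⟨p⟩ := h
  induction p with
  | nil => rfl
  | cons h _ ih => exact h.2.trans ih

lemma Connected.reachable_monochromatic {s : Set V} (hs : (R.induce s).Connected)
    (hf : ∀ a ∈ s, ∀ b ∈ s, f a = f b) (hu : u ∈ s) (hv : v ∈ s) :
    (R.monochromatic f).Reachable u v :=
  let incl : R.induce s →g R.monochromatic f :=
    ⟨Subtype.val, fun {a b} hab => ⟨hab, hf a a.2 b b.2⟩⟩
  (hs.preconnected ⟨u, hu⟩ ⟨v, hv⟩).map incl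

lemma connected_induce_reachable_of_le (hK : K ≤ R) (v : V) :
    (R.induce {u | K.Reachable u v}).Connected := by
  have hsupp : (K.connectedComponentMk v).supp = {u | K.Reachable u v} := by
    ext u
    exact ConnectedComponent.eq
  exact hsupp ▸ (K.connectedComponentMk v).connected_toSimpleGraph.mono
    (comap_monotone _ hK)

end SimpleGraph

open SimpleGraph

instance {α : Type*} [Finite α] : Finite (Setoid α) :=
  .of_injective (fun ρ : Setoid α => ⇑ρ) fun _ _ => Setoid.eq_iff_rel_eq.mpr

section Partitions

variable {V W α : Type} {H R : SimpleGraph V} {G : SimpleGraph W} {ρ : Setoid V} {f : V → α}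

lemma RConnectedPartition.le_reachableSetoid_monochromatic (hρ : RConnectedPartition R ρ)
    (hf : ∀ u v, ρ.r u v → f u = f v) : ρ ≤ (R.monochromatic f).reachableSetoid :=
  fun _ v huv => (hρ v).reachable_monochromatic
    (fun a ha b hb => (hf a v ha).trans (hf b v hb).symm) huv (ρ.refl v)

lemma reachableSetoid_monochromatic_le (hf : ∀ u v, R.Adj u v → ¬ρ.r u v → f u ≠ f v) :
    (R.monochromatic f).reachableSetoid ≤ ρ := by
  rintro _ _ ⟨p⟩
  induction p with
  | nil => exact ρ.refl _
  | cons h _ ih => exact ρ.trans (not_not.mp fun hne => hf _ _ h.1 hne h.2) ih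

lemma rConnectedPartition_reachableSetoid_monochromatic :
    RConnectedPartition R (R.monochromatic f).reachableSetoid :=
  connected_induce_reachable_of_le monochromatic_le

lemma LoopFreePartition.of_hom (φ : H →g G) (hφ : ∀ u v, ρ.r u v → φ u = φ v) :
    LoopFreePartition H ρ :=
  fun u v huv hadj => G.loopless.irrefl _ (hφ u v huv ▸ φ.map_adj hadj)

end Partitions

namespace quotientGraph

variable {V W : Type} {H : SimpleGraph V} {G : SimpleGraph W} {ρ : Setoid V}

def mk (hρ : LoopFreePartition H ρ) : H →g quotientGraph H ρ where
  toFun := Quotient.mk ρ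
  map_rel' {u v} hadj := ⟨fun h => hρ u v (Quotient.exact h) hadj, u, v, rfl, rfl, hadj⟩

def lift (φ : H →g G) (hφ : ∀ u v, ρ.r u v → φ u = φ v) : quotientGraph H ρ →g G where
  toFun := Quotient.lift φ hφ
  map_rel' := by
    rintro _ _ ⟨-, u, v, rfl, rfl, hadj⟩
    exact φ.map_adj hadj

lemma hom_ext {ψ ψ' : quotientGraph H ρ →g G} (h : ∀ u, ψ ⟦u⟧ = ψ' ⟦u⟧) : ψ = ψ' :=
  DFunLike.ext _ _ (Quotient.ind h)

end quotientGraph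

section Pullback

variable {V W : Type} {H : SimpleGraph V} {G : SimpleGraph W} {R : SimpleGraph V}
  {σ ρ : Setoid V}

def coarsenings (H R : SimpleGraph V) (σ : Setoid V) : Set (Setoid V) :=
  {ρ | RConnectedPartition R ρ ∧ LoopFreePartition H ρ ∧ σ ≤ ρ}

instance [Finite V] [Finite W] : Finite (RRestrictedHom H G R ρ) :=
  Subtype.finite

lemma RRestrictedHom.eq_reachableSetoid_monochromatic (hρ : RConnectedPartition R ρ)
    (ψ : RRestrictedHom H G R ρ) : ρ = (R.monochromatic fun u => ψ.1 ⟦u⟧).reachableSetoid :=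
  le_antisymm
    (hρ.le_reachableSetoid_monochromatic fun _ _ h => congrArg ψ.1 (Quotient.sound h))
    (reachableSetoid_monochromatic_le fun u v hR hne =>
      ψ.2 u v hR fun h => hne (Quotient.exact h))

def RRestrictedHom.pullback (hρ : LoopFreePartition H ρ) (hσρ : σ ≤ ρ)
    (ψ : RRestrictedHom H G R ρ) : quotientGraph H σ →g G :=
  quotientGraph.lift (ψ.1.comp (quotientGraph.mk hρ))
    fun _ _ h => congrArg ψ.1 (Quotient.sound (hσρ h))

variable (H G R σ) in
def pullbackSigma :
    (Σ ρ : coarsenings H R σ, RRestrictedHom H G R ρ) → (quotientGraph H σ →g G) :=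
  fun ⟨ρ, ψ⟩ => ψ.pullback ρ.2.2.1 ρ.2.2.2

lemma pullbackSigma_injective : Function.Injective (pullbackSigma H G R σ) := by
  rintro ⟨⟨ρ, hρ, _⟩, ψ⟩ ⟨⟨ρ', hρ', _⟩, ψ'⟩ h
  have hψ : ∀ u, ψ.1 ⟦u⟧ = ψ'.1 ⟦u⟧ := fun u => DFunLike.congr_fun h ⟦u⟧
  obtain rfl : ρ = ρ' := calc
    ρ = (R.monochromatic fun u => ψ.1 ⟦u⟧).reachableSetoid :=
      ψ.eq_reachableSetoid_monochromatic hρ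
    _ = (R.monochromatic fun u => ψ'.1 ⟦u⟧).reachableSetoid := by rw [funext hψ]
    _ = ρ' := (ψ'.eq_reachableSetoid_monochromatic hρ').symm
  obtain rfl : ψ = ψ' := Subtype.ext (quotientGraph.hom_ext hψ)
  rfl

lemma pullbackSigma_surjective (hσc : RConnectedPartition R σ) (hσl : LoopFreePartition H σ) :
    Function.Surjective (pullbackSigma H G R σ) := by
  intro φ
  let f : H →g G := φ.comp (quotientGraph.mk hσl)
  let ρ := (R.monochromatic f).reachableSetoid
  have hf : ∀ u v, ρ.r u v → f u = f v := fun _ _ h => h.apply_eq_of_monochromatic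
  have hσρ : σ ≤ ρ :=
    hσc.le_reachableSetoid_monochromatic fun _ _ h => congrArg φ (Quotient.sound h)
  let ψ : RRestrictedHom H G R ρ := ⟨quotientGraph.lift f hf,
    fun _ _ hR hne heq => hne (Quotient.sound (Adj.reachable ⟨hR, heq⟩))⟩
  exact ⟨⟨⟨ρ, rConnectedPartition_reachableSetoid_monochromatic, .of_hom f hf, hσρ⟩, ψ⟩,
    quotientGraph.hom_ext fun _ => rfl⟩

end Pullback

/-- The zeta-transform identity: for an `R`-connected, `H`-loop-free partition `σ`,
the number of homomorphisms from `H/σ` to `G` equals the sum, over all `R`-connected,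
`H`-loop-free partitions `ρ` refined by `σ`, of `#Hom(H/ρ, G)[R]`. -/
theorem card_hom_quotient_eq_sum_restricted {V W : Type} [Fintype V] [Fintype W]
    (H : SimpleGraph V) (G : SimpleGraph W) (R : SimpleGraph V)
    (σ : Setoid V) (hσc : RConnectedPartition R σ) (hσl : LoopFreePartition H σ) :
    Nat.card (quotientGraph H σ →g G) =
      ∑ᶠ ρ ∈ {ρ : Setoid V |
          RConnectedPartition R ρ ∧ LoopFreePartition H ρ ∧ σ ≤ ρ},
        Nat.card (RRestrictedHom H G R ρ) := by
  have := Fintype.ofFinite (coarsenings H R σ)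
  let e := Equiv.ofBijective (pullbackSigma H G R σ)
    ⟨pullbackSigma_injective, pullbackSigma_surjective hσc hσl⟩
  rw [← Nat.card_congr e, Nat.card_sigma, ← finsum_eq_sum_of_fintype]
  exact finsum_set_coe_eq_finsum_mem (f := fun ρ => Nat.card (RRestrictedHom H G R ρ)) _
end

section
/- Let H and G be finite simple graphs and let R be a finite simple graph with vertex set V(H). Let L be the lattice of R-connected partitions of V(H) ordered by refinement, with minimum element ⊥ (the partition into singletons) and Möbius function μ. Then the number of homomorphisms φ from H to G satisfying φ(u) ≠ φ(v) for every edge {u,v} of R equals the sum, over all H-loop-free partitions ρ ∈ L, of μ(⊥, ρ) times the number of homomorphisms from H/ρ to G. -/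
/-! Call `κ(φ)` the partition of `V(H)` into the connected components of the subgraph of `R`
formed by the edges whose endpoints `φ` does not separate. An `R`-connected partition `ρ`
has `φ` constant on its blocks iff `ρ ≤ κ(φ)`. Counting `Hom(H/ρ, G)` as the homomorphisms
`H → G` constant on the blocks of `ρ` (there are none unless `ρ` is `H`-loop-free) and
swapping the two sums, the Möbius recurrence turns the contribution of `φ` into
`[κ(φ) = ⊥]`, which is `1` exactly when `φ` separates every edge of `R`. -/

open scoped Classical

instance Setoid.finite {α : Type*} [Finite α] : Finite (Setoid α) :=
  Finite.of_injective (fun s : Setoid α => s.r) fun _ _ h =>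
    Setoid.ext fun x y => Iff.of_eq (congrFun₂ h x y)

theorem finsum_mem_setOf_eq_sum_filter {α M : Type*} [Fintype α] [AddCommMonoid M]
    (q : α → Prop) (f : α → M) : ∑ᶠ a ∈ {a | q a}, f a = ∑ a with q a, f a := by
  rw [← finsum_mem_coe_finset, Finset.coe_filter]
  simp

theorem natCard_subtype_eq_sum_ite {X : Type*} [Fintype X] (q : X → Prop) :
    (Nat.card {x // q x} : ℤ) = ∑ x, if q x then 1 else 0 := by
  simp [Nat.card_eq_fintype_card, Fintype.card_subtype, Finset.sum_boole]

theorem finsum_moebius_mul_card_le_eq_card_eq_bot {P X : Type*} [LE P] [Bot P] [Finite P]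
    [Finite X] (p : P → Prop) (μ : P → ℤ)
    (hμ : ∀ ρ, p ρ → ∑ᶠ σ ∈ {σ | p σ ∧ σ ≤ ρ}, μ σ = if ρ = ⊥ then 1 else 0)
    (c κ : X → P) (hκ : ∀ x, p (κ x)) (hκc : ∀ x σ, p σ → (σ ≤ κ x ↔ σ ≤ c x)) :
    ∑ᶠ ρ ∈ {ρ | p ρ}, μ ρ * Nat.card {x // ρ ≤ c x} = Nat.card {x // κ x = ⊥} := by
  have := Fintype.ofFinite P
  have := Fintype.ofFinite X
  calc ∑ᶠ ρ ∈ {ρ | p ρ}, μ ρ * Nat.card {x // ρ ≤ c x}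
      = ∑ ρ with p ρ, ∑ x, if ρ ≤ κ x then μ ρ else 0 := by
        rw [finsum_mem_setOf_eq_sum_filter]
        refine Finset.sum_congr rfl fun ρ hρ => ?_
        rw [natCard_subtype_eq_sum_ite, Finset.mul_sum]
        refine Finset.sum_congr rfl fun x _ => ?_
        simp [hκc x ρ (Finset.mem_filter.1 hρ).2]
    _ = ∑ x, ∑ᶠ σ ∈ {σ | p σ ∧ σ ≤ κ x}, μ σ := by
        rw [Finset.sum_comm]
        refine Finset.sum_congr rfl fun x _ => ?_
        rw [finsum_mem_setOf_eq_sum_filter, Finset.sum_filter, Finset.sum_filter]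
        refine Finset.sum_congr rfl fun σ _ => ?_
        by_cases h : p σ <;> simp [h]
    _ = Nat.card {x // κ x = ⊥} := by
        rw [natCard_subtype_eq_sum_ite]
        exact Finset.sum_congr rfl fun x _ => hμ _ (hκ x)

namespace SimpleGraph

variable {V : Type} {α : Type*} (R : SimpleGraph V) (f : V → α)

def monochromaticGraph : SimpleGraph V := R \ (⊤ : SimpleGraph α).comap f

def monochromaticComponents : Setoid V := (R.monochromaticGraph f).reachableSetoid

variable {R f}

@[simp]
theorem monochromaticGraph_adj {u v : V} :
    (R.monochromaticGraph f).Adj u v ↔ R.Adj u v ∧ f u = f v := by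
  simp [monochromaticGraph]

theorem monochromaticComponents_le_ker : R.monochromaticComponents f ≤ Setoid.ker f := by
  intro u v huv
  replace huv := (reachable_iff_reflTransGen u v).1 huv
  induction huv with
  | refl => rfl
  | tail _ hadj ih => exact ih.trans (monochromaticGraph_adj.1 hadj).2

theorem rConnectedPartition_monochromaticComponents :
    RConnectedPartition R (R.monochromaticComponents f) := by
  intro v
  have hblock : {u | (R.monochromaticComponents f).r u v} =
      ((R.monochromaticGraph f).connectedComponentMk v).supp := by
    ext u
    exact ConnectedComponent.eq.symm
  rw [hblock]
  exact (ConnectedComponent.connected_toSimpleGraph _).mono (comap_monotone _ sdiff_le)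

theorem le_monochromaticComponents_iff {σ : Setoid V} (hσ : RConnectedPartition R σ) :
    σ ≤ R.monochromaticComponents f ↔ σ ≤ Setoid.ker f := by
  refine ⟨fun h => h.trans monochromaticComponents_le_ker, fun hle u v huv => ?_⟩
  let toMonochromatic : R.induce {x | σ.r x v} →g R.monochromaticGraph f :=
    { toFun := Subtype.val
      map_rel' := fun {x y} hxy =>
        monochromaticGraph_adj.2 ⟨hxy, (hle x.2).trans (hle y.2).symm⟩ }
  exact ((hσ v).preconnected ⟨u, huv⟩ ⟨v, σ.refl' v⟩).map toMonochromatic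

theorem monochromaticComponents_eq_bot_iff :
    R.monochromaticComponents f = ⊥ ↔ ∀ u v, R.Adj u v → f u ≠ f v := by
  constructor
  · intro h u v hadj heq
    have : (R.monochromaticComponents f).r u v :=
      (monochromaticGraph_adj.2 ⟨hadj, heq⟩).reachable
    exact hadj.ne (by rwa [h] at this)
  · intro h
    have hbot : R.monochromaticGraph f = ⊥ := by
      ext u v
      simpa using h u v
    refine le_antisymm (fun u v huv => ?_) bot_le
    exact reachable_bot.1 (hbot ▸ huv)

end SimpleGraph

section QuotientGraph

variable {V W : Type} {H : SimpleGraph V} {G : SimpleGraph W}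

theorem loopFreePartition_of_le_ker (φ : H →g G) {ρ : Setoid V} (hle : ρ ≤ Setoid.ker φ) :
    LoopFreePartition H ρ := fun _ _ huv hadj =>
  (φ.map_adj hadj).ne (hle huv)

noncomputable def quotientGraphHomEquiv {ρ : Setoid V} (hρ : LoopFreePartition H ρ) :
    (quotientGraph H ρ →g G) ≃ {φ : H →g G // ρ ≤ Setoid.ker φ} where
  toFun ψ := ⟨⟨fun v => ψ (Quotient.mk ρ v), fun {u v} huv =>
      ψ.map_rel ⟨fun h => hρ u v (Quotient.exact h) huv, u, v, rfl, rfl, huv⟩⟩,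
    fun _ _ huv => congrArg ψ (Quotient.sound huv)⟩
  invFun φ := ⟨Quotient.lift φ.1 fun _ _ h => φ.2 h, by
      rintro _ _ ⟨-, u, v, rfl, rfl, huv⟩
      exact φ.1.map_rel huv⟩
  left_inv ψ := by
    ext B
    induction B using Quotient.ind
    rfl
  right_inv _ := rfl

end QuotientGraph

/-- **Möbius inversion over the lattice of `R`-connected partitions.**
Let `L` be the lattice of `R`-connected partitions of `V(H)` ordered by refinement, with
minimum element `⊥` (the partition into singletons, i.e. the bottom setoid) and Möbius
function `μ = μ(⊥, ·)`, characterized by the defining recurrence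
`∑_{σ ∈ L, σ ≤ ρ} μ(σ) = [ρ = ⊥]` for all `ρ ∈ L`.  Then the number of homomorphisms
`φ : H → G` satisfying `φ(u) ≠ φ(v)` for every edge `{u,v}` of `R` equals the sum, over
all `H`-loop-free partitions `ρ ∈ L`, of `μ(⊥, ρ) · #Hom(H/ρ, G)`. -/
theorem card_restricted_hom_eq_moebius_sum {V W : Type} [Fintype V] [Fintype W]
    (H : SimpleGraph V) (G : SimpleGraph W) (R : SimpleGraph V)
    (μ : Setoid V → ℤ)
    (hμ : ∀ ρ : Setoid V, RConnectedPartition R ρ →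
      (∑ᶠ σ ∈ {σ : Setoid V | RConnectedPartition R σ ∧ σ ≤ ρ}, μ σ)
        = if ρ = ⊥ then 1 else 0) :
    (Nat.card {φ : H →g G // ∀ u v : V, R.Adj u v → φ u ≠ φ v} : ℤ) =
      ∑ᶠ ρ ∈ {ρ : Setoid V | RConnectedPartition R ρ ∧ LoopFreePartition H ρ},
        μ ρ * Nat.card (quotientGraph H ρ →g G) := by
  have hquotient : ∀ ρ ∈ {ρ | RConnectedPartition R ρ ∧ LoopFreePartition H ρ},
      (μ ρ * Nat.card (quotientGraph H ρ →g G) : ℤ) =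
        μ ρ * Nat.card {φ : H →g G // ρ ≤ Setoid.ker φ} := fun ρ hρ => by
    rw [Nat.card_congr (quotientGraphHomEquiv hρ.2)]
  have hloopFree : ∀ ρ ∈ Function.support
      fun ρ => (μ ρ * Nat.card {φ : H →g G // ρ ≤ Setoid.ker φ} : ℤ),
      ρ ∈ {ρ | RConnectedPartition R ρ ∧ LoopFreePartition H ρ} ↔
        ρ ∈ {ρ | RConnectedPartition R ρ} := fun ρ hρ => by
    obtain ⟨⟨φ, hφ⟩, -⟩ := Nat.card_ne_zero.1 (Int.natCast_ne_zero.1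
      (right_ne_zero_of_mul (Function.mem_support.1 hρ)))
    simp [loopFreePartition_of_le_ker φ hφ]
  rw [finsum_mem_congr rfl hquotient, finsum_mem_inter_support_eq' _ _ _ hloopFree,
    finsum_moebius_mul_card_le_eq_card_eq_bot _ μ hμ _ _
      (fun _ => SimpleGraph.rConnectedPartition_monochromaticComponents)
      (fun _ _ => SimpleGraph.le_monochromaticComponents_iff)]
  exact congrArg _ (Nat.card_congr
    (Equiv.subtypeEquivRight fun _ => SimpleGraph.monochromaticComponents_eq_bot_iff)).symm
end

section
/- Let T be a finite tree and let ρ be a partition of V(T) such that (i) every block of ρ induces a connected subgraph of τLi(T), and (ii) no block of ρ contains two vertices that are adjacent in T. Then the quotient graph T/ρ is a tree. (In other words, every τLi-minor of a tree is again a tree.) -/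
/-- `τLi(H)`: the graph on `V(H)` in which two distinct vertices are adjacent iff they
have a common neighbor in `H`. -/
def tauLi {V : Type} (H : SimpleGraph V) : SimpleGraph V where
  Adj u w := u ≠ w ∧ ∃ v : V, H.Adj u v ∧ H.Adj w v
  symm := by
    constructor
    rintro u w ⟨hne, v, h1, h2⟩
    exact ⟨hne.symm, v, h2, h1⟩
  loopless := by
    constructor
    rintro u ⟨hne, -⟩
    exact hne rfl

/-!
Root the tree `T` at a vertex `r` and give each block of `ρ` the height of its vertices
closest to the root. Every `τLi`-edge changes the depth by `0` or `2`, so depth parity is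
constant on a block, and adjacent blocks have heights of different parity. The vertices of a
block of height `d > 0` all lie in the subtree below the parent `z` of one of its lowest
vertices. A neighbouring block of smaller height starts inside this subtree and reaches depth
`< d` outside it; being `τLi`-connected and of the parity of `z`, it can only leave the subtree
through `z` itself. Hence every block has at most one neighbouring block of smaller height,
which rules out cycles in `T/ρ`: the highest block of a cycle would have two of them.
-/

section LowestRep

variable {V α : Type*} [LinearOrder α] [WellFoundedLT α] (ρ : Setoid V) (f : V → α)

noncomputable def lowestRep (β : Quotient ρ) : V :=
  Function.argminOn f {x | Quotient.mk ρ x = β} β.exists_rep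

variable {ρ}

theorem mk_lowestRep (β : Quotient ρ) : Quotient.mk ρ (lowestRep ρ f β) = β :=
  Function.argminOn_mem f {x | Quotient.mk ρ x = β} _

theorem lowestRep_le {β : Quotient ρ} {x : V} (hx : Quotient.mk ρ x = β) :
    f (lowestRep ρ f β) ≤ f x :=
  Function.argminOn_le f {x | Quotient.mk ρ x = β} hx

theorem rel_lowestRep {β : Quotient ρ} {x : V} (hx : Quotient.mk ρ x = β) :
    ρ.r x (lowestRep ρ f β) :=
  Quotient.exact (hx.trans (mk_lowestRep f β).symm)

end LowestRep

namespace SimpleGraph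

section General

variable {V : Type*} {G : SimpleGraph V}

theorem isAcyclic_of_unique_lower_adj {α : Type*} [LinearOrder α] (h : V → α) (hne : ∀ ⦃a b⦄, G.Adj a b → h a ≠ h b)
    (huniq : ∀ ⦃a b c⦄, G.Adj a b → G.Adj a c → h b < h a → h c < h a → b = c) :
    G.IsAcyclic := by
  classical
  intro u c hc
  obtain ⟨v, hv, hmax⟩ := c.support.toFinset.exists_max_image h ⟨u, by simp⟩
  rw [List.mem_toFinset] at hv
  have hlower : ∀ x ∈ c.toSubgraph.neighborSet v, G.Adj v x ∧ h x < h v := by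
    intro x hx
    have hadj : c.toSubgraph.Adj v x := hx
    refine ⟨hadj.adj_sub, lt_of_le_of_ne ?_ (hne hadj.adj_sub).symm⟩
    exact hmax x (List.mem_toFinset.2 (Walk.mem_support_of_adj_toSubgraph hadj.symm))
  obtain ⟨b, b', hbb', hnbhd⟩ := Set.ncard_eq_two.1 (hc.ncard_neighborSet_toSubgraph_eq_two hv)
  obtain ⟨hb, hbv⟩ := hlower b (by simp [hnbhd])
  obtain ⟨hb', hbv'⟩ := hlower b' (by simp [hnbhd])
  exact hbb' (huniq hb hb' hbv hbv')

theorem Preconnected.exists_adj_mem_notMem_of_induce {s S : Set V}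
    (hs : (G.induce s).Preconnected) {u v : V} (hu : u ∈ s) (hv : v ∈ s) (huS : u ∈ S)
    (hvS : v ∉ S) : ∃ a ∈ s, ∃ b ∈ s, G.Adj a b ∧ a ∈ S ∧ b ∉ S := by
  obtain ⟨p⟩ := hs ⟨u, hu⟩ ⟨v, hv⟩
  obtain ⟨d, -, hdS, hdS'⟩ := p.exists_boundary_dart (Subtype.val ⁻¹' S) huS hvS
  exact ⟨d.fst, d.fst.2, d.snd, d.snd.2, d.adj, hdS, hdS'⟩

theorem Connected.exists_adj_dist_add_one_eq (hG : G.Connected) {u v : V} (huv : u ≠ v) :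
    ∃ w, G.Adj w v ∧ G.dist u w + 1 = G.dist u v := by
  obtain ⟨p, hp⟩ := hG.exists_walk_length_eq_dist v u
  have hnil : ¬p.Nil := fun h => huv (h.eq).symm
  refine ⟨p.snd, (p.adj_snd hnil).symm, ?_⟩
  have hle : G.dist p.snd u ≤ p.tail.length := dist_le _
  have htail := p.length_tail_add_one hnil
  have hclose := (p.adj_snd hnil).diff_dist_adj (u := u)
  rw [dist_comm] at hp hle
  omega

def descendants (G : SimpleGraph V) (r z : V) : Set V :=
  {x | ∃ p : G.Walk r x, p.IsPath ∧ z ∈ p.support}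

namespace IsTree

variable (hG : G.IsTree) {r : V}
include hG

theorem length_eq_dist_of_isPath {u v : V} {p : G.Walk u v} (hp : p.IsPath) :
    p.length = G.dist u v := by
  obtain ⟨q, hq, hlen⟩ := hG.connected.exists_path_of_dist u v
  rwa [(hG.existsUnique_path u v).unique hp hq]

theorem mem_descendants_self (z : V) : z ∈ G.descendants r z := by
  obtain ⟨p, hp, -⟩ := hG.existsUnique_path r z
  exact ⟨p, hp, p.end_mem_support⟩

theorem eq_of_mem_descendants_of_dist_le {x z : V} (hx : x ∈ G.descendants r z)
    (hd : G.dist r x ≤ G.dist r z) : x = z := by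
  classical
  obtain ⟨p, hp, hz⟩ := hx
  have htake := hG.length_eq_dist_of_isPath (hp.takeUntil hz)
  have hlen : (p.takeUntil z hz).length + (p.dropUntil z hz).length = p.length := by
    rw [← Walk.length_append, Walk.take_spec]
  have := hG.length_eq_dist_of_isPath hp
  exact (Walk.eq_of_length_eq_zero (by omega : (p.dropUntil z hz).length = 0)).symm

theorem eq_of_adj_of_mem_descendants {a c z : V} (h : G.Adj a c) (ha : a ∈ G.descendants r z)
    (hc : c ∉ G.descendants r z) : a = z ∧ G.dist r c + 1 = G.dist r a := by
  obtain ⟨p, hp, hzp⟩ := ha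
  obtain ⟨q, hq, -⟩ := hG.connected.exists_path_of_dist r c
  by_cases haq : a ∈ q.support
  · refine absurd ⟨q, hq, ?_⟩ hc
    rw [hG.isAcyclic.path_concat hp hq h haq]
    exact p.support_subset_support_concat h hzp
  · have hcp := hG.isAcyclic.mem_support_of_ne_mem_support_of_adj_of_isPath hp hq h haq
    obtain rfl := hG.isAcyclic.path_concat hq hp h.symm hcp
    rw [Walk.support_concat, List.mem_append, List.mem_singleton] at hzp
    refine ⟨(hzp.resolve_left fun hzq => hc ⟨q, hq, hzq⟩).symm, ?_⟩
    rw [← hG.length_eq_dist_of_isPath hq, ← hG.length_eq_dist_of_isPath hp, Walk.length_concat]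

end IsTree

end General

section TauLi

variable {V : Type} {T : SimpleGraph V} (hT : T.IsTree) (r : V)
include hT

theorem IsTree.dist_mod_two_eq_of_tauLi_adj {a b : V} (h : (tauLi T).Adj a b) :
    T.dist r a % 2 = T.dist r b % 2 := by
  obtain ⟨-, c, hac, hbc⟩ := h
  have := hT.dist_eq_dist_add_one_of_adj r hac
  have := hT.dist_eq_dist_add_one_of_adj r hbc
  omega

theorem IsTree.mem_of_tauLi_preconnected {s : Set V} (hs : ((tauLi T).induce s).Preconnected)
    {z w y : V} (hpar : ∀ x ∈ s, T.dist r x % 2 = T.dist r z % 2) (hw : w ∈ s)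
    (hwz : w ∈ T.descendants r z) (hy : y ∈ s) (hyz : y ∉ T.descendants r z) : z ∈ s := by
  obtain ⟨a, ha, b, -, ⟨-, c, hac, hbc⟩, haz, hbz⟩ :=
    hs.exists_adj_mem_notMem_of_induce hw hy hwz hyz
  by_cases hcz : c ∈ T.descendants r z
  · obtain ⟨rfl, -⟩ := hT.eq_of_adj_of_mem_descendants hbc.symm hcz hbz
    have := hT.dist_eq_dist_add_one_of_adj r hac
    have := hpar a ha
    omega
  · exact (hT.eq_of_adj_of_mem_descendants hac haz hcz).1 ▸ ha

variable {ρ : Setoid V} (hconn : ∀ v : V, ((tauLi T).induce {u : V | ρ.r u v}).Connected)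
include hconn

theorem IsTree.dist_mod_two_eq_of_rel {a b : V} (h : ρ.r a b) :
    T.dist r a % 2 = T.dist r b % 2 := by
  by_contra hne
  obtain ⟨x, -, y, -, hxy, hx, hy⟩ := (hconn b).preconnected.exists_adj_mem_notMem_of_induce
    (S := {x | T.dist r x % 2 = T.dist r a % 2}) h (ρ.refl b) rfl (Ne.symm hne)
  exact hy ((hT.dist_mod_two_eq_of_tauLi_adj r hxy).symm.trans hx)

theorem IsTree.mem_descendants_of_rel {x₀ z x : V}
    (hmin : ∀ y, ρ.r y x₀ → T.dist r x₀ ≤ T.dist r y) (hz : T.Adj z x₀)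
    (hzd : T.dist r z + 1 = T.dist r x₀) (hx : ρ.r x x₀) : x ∈ T.descendants r z := by
  have hx₀ : x₀ ∈ T.descendants r z := by
    by_contra h
    have := (hT.eq_of_adj_of_mem_descendants hz (hT.mem_descendants_self z) h).2
    omega
  by_contra hxz
  obtain ⟨a, ha, b, hb, ⟨-, c, hac, hbc⟩, haz, hbz⟩ :=
    (hconn x₀).preconnected.exists_adj_mem_notMem_of_induce (ρ.refl x₀) hx hx₀ hxz
  have := hmin a ha
  have := hmin b hb
  by_cases hcz : c ∈ T.descendants r z
  · obtain ⟨rfl, hbd⟩ := hT.eq_of_adj_of_mem_descendants hbc.symm hcz hbz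
    omega
  · obtain ⟨rfl, -⟩ := hT.eq_of_adj_of_mem_descendants hac haz hcz
    omega

theorem IsTree.rel_of_adj_of_dist_lt {x₀ z u w y : V}
    (hmin : ∀ x, ρ.r x x₀ → T.dist r x₀ ≤ T.dist r x) (hz : T.Adj z x₀)
    (hzd : T.dist r z + 1 = T.dist r x₀) (hu : ρ.r u x₀) (huw : T.Adj u w) (hy : ρ.r y w)
    (hyd : T.dist r y < T.dist r x₀) : ρ.r z w := by
  have huz := hT.mem_descendants_of_rel r hconn hmin hz hzd hu
  have hwz : w ∈ T.descendants r z := by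
    by_contra hwz
    obtain ⟨rfl, -⟩ := hT.eq_of_adj_of_mem_descendants huw huz hwz
    have := hmin u hu
    omega
  by_cases hyz : y ∈ T.descendants r z
  · rwa [← hT.eq_of_mem_descendants_of_dist_le hyz (by omega)]
  · refine hT.mem_of_tauLi_preconnected r (hconn w).preconnected ?_ (ρ.refl w) hwz hy hyz
    intro x hx
    have := hT.dist_mod_two_eq_of_rel r hconn hx
    have := hT.dist_mod_two_eq_of_rel r hconn hu
    have := hT.dist_eq_dist_add_one_of_adj r huw
    omega

theorem IsTree.dist_lowestRep_mod_two_ne {β γ : Quotient ρ}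
    (h : (quotientGraph T ρ).Adj β γ) :
    T.dist r (lowestRep ρ (T.dist r) β) % 2 ≠ T.dist r (lowestRep ρ (T.dist r) γ) % 2 := by
  obtain ⟨-, u, w, rfl, rfl, huw⟩ := h
  have := hT.dist_mod_two_eq_of_rel r hconn (rel_lowestRep (T.dist r) rfl : ρ.r u _)
  have := hT.dist_mod_two_eq_of_rel r hconn (rel_lowestRep (T.dist r) rfl : ρ.r w _)
  have := hT.dist_eq_dist_add_one_of_adj r huw
  omega

theorem IsTree.mk_eq_of_quotientGraph_adj {β γ : Quotient ρ} {z : V}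
    (hz : T.Adj z (lowestRep ρ (T.dist r) β))
    (hzd : T.dist r z + 1 = T.dist r (lowestRep ρ (T.dist r) β))
    (h : (quotientGraph T ρ).Adj β γ)
    (hlt : T.dist r (lowestRep ρ (T.dist r) γ) < T.dist r (lowestRep ρ (T.dist r) β)) :
    Quotient.mk ρ z = γ := by
  obtain ⟨-, u, w, hu, rfl, huw⟩ := h
  refine Quotient.sound (hT.rel_of_adj_of_dist_lt r hconn ?_ hz hzd (rel_lowestRep _ hu) huw
    (ρ.symm (rel_lowestRep _ rfl)) hlt)
  exact fun x hx => lowestRep_le _ ((Quotient.sound hx).trans (mk_lowestRep _ β))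

end TauLi

end SimpleGraph

open SimpleGraph

theorem quotientGraph_connected {V : Type} {T : SimpleGraph V} {ρ : Setoid V}
    (hT : T.Connected) (hloop : ∀ u v : V, ρ.r u v → ¬ T.Adj u v) :
    (quotientGraph T ρ).Connected :=
  hT.map ⟨Quotient.mk ρ, fun h => ⟨fun he => hloop _ _ (Quotient.exact he) h, _, _, rfl, rfl, h⟩⟩
    Quotient.mk_surjective

theorem quotient_of_tree_isTree_general {V : Type} (T : SimpleGraph V) (hT : T.IsTree)
    (ρ : Setoid V)
    (hconn : ∀ v : V, ((tauLi T).induce {u : V | ρ.r u v}).Connected)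
    (hloop : ∀ u v : V, ρ.r u v → ¬ T.Adj u v) :
    (quotientGraph T ρ).IsTree := by
  obtain ⟨r⟩ := hT.connected.nonempty
  let height (β : Quotient ρ) : ℕ := T.dist r (lowestRep ρ (T.dist r) β)
  refine ⟨quotientGraph_connected hT.connected hloop, isAcyclic_of_unique_lower_adj height
    (fun β γ h heq => hT.dist_lowestRep_mod_two_ne r hconn h (congrArg (· % 2) heq)) ?_⟩
  intro β γ γ' h h' hlt hlt'
  obtain ⟨z, hz, hzd⟩ := hT.connected.exists_adj_dist_add_one_eq (u := r)
    (v := lowestRep ρ (T.dist r) β) fun hr => by simp [height, ← hr] at hlt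
  exact (hT.mk_eq_of_quotientGraph_adj r hconn hz hzd h hlt).symm.trans
    (hT.mk_eq_of_quotientGraph_adj r hconn hz hzd h' hlt')

/-- **Every `τLi`-minor of a tree is a tree.**
If `T` is a finite tree and `ρ` is a partition of `V(T)` such that every block induces a
connected subgraph of `τLi(T)` and no block contains two vertices adjacent in `T`, then
the quotient graph `T/ρ` is a tree. -/
theorem quotient_of_tree_isTree {V : Type} [Fintype V] (T : SimpleGraph V) (hT : T.IsTree)
    (ρ : Setoid V)
    (hconn : ∀ v : V, ((tauLi T).induce {u : V | ρ.r u v}).Connected)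
    (hloop : ∀ u v : V, ρ.r u v → ¬ T.Adj u v) :
    (quotientGraph T ρ).IsTree :=
  quotient_of_tree_isTree_general T hT ρ hconn hloop
end

section
/- Let T be a finite tree and let u ≠ w be two vertices of T that have a common neighbor in T. Let ρ be the partition of V(T) whose blocks are {u, w} and the singletons {x} for all other vertices x. Then the quotient graph T/ρ is a tree. -/
/-!
The quotient `T/ρ` is connected as an image of `T`, and since the quotient map is injective
away from `w`, it has at least `|V(T)| - 1` vertices. Since `uv` and `wv` are distinct edges of `T` with the same image, `T/ρ` has at least one
edge fewer than `T`, hence at most `|V(T/ρ)| - 1` edges; a connected finite graph with that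
few edges is a tree.
-/

theorem Set.ncard_image_lt_of_not_injOn {α β : Type*} {f : α → β} {s : Set α}
    (hs : s.Finite) (hf : ¬ Set.InjOn f s) : (f '' s).ncard < s.ncard :=
  (Set.ncard_image_le hs).lt_of_ne fun h => hf (Set.ncard_image_iff hs |>.1 h)

theorem Nat.card_le_card_add_one_of_injOn_compl_singleton {α β : Type*} [Finite α] [Finite β]
    {f : α → β} {a : α} (hf : Set.InjOn f {a}ᶜ) : Nat.card α ≤ Nat.card β + 1 :=
  calc Nat.card α = ({a}ᶜ : Set α).ncard + 1 := by
        rw [← Set.ncard_compl_add_ncard {a}, Set.ncard_singleton]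
    _ = (f '' {a}ᶜ).ncard + 1 := by rw [hf.ncard_image]
    _ ≤ Nat.card β + 1 := Nat.add_le_add_right (Set.ncard_le_card _) 1

namespace SimpleGraph

theorem Connected.isTree_of_card_edgeSet_add_one_le {V : Type*} [Finite V] {G : SimpleGraph V}
    (hG : G.Connected) (h : Nat.card G.edgeSet + 1 ≤ Nat.card V) : G.IsTree :=
  isTree_iff_connected_and_card.2 ⟨hG, le_antisymm h hG.card_vert_le_card_edgeSet_add_one⟩

end SimpleGraph

section QuotientGraph

variable {V : Type} (H : SimpleGraph V) (ρ : Setoid V)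

theorem quotientGraph_reachable_mk_of_adj {x y : V} (h : H.Adj x y) :
    (quotientGraph H ρ).Reachable (Quotient.mk ρ x) (Quotient.mk ρ y) := by
  by_cases hxy : Quotient.mk ρ x = Quotient.mk ρ y
  · rw [hxy]
  · exact SimpleGraph.Adj.reachable ⟨hxy, x, y, rfl, rfl, h⟩

theorem quotientGraph_reachable_mk {x y : V} (h : H.Reachable x y) :
    (quotientGraph H ρ).Reachable (Quotient.mk ρ x) (Quotient.mk ρ y) := by
  obtain ⟨p⟩ := h
  induction p with
  | nil => rfl
  | cons hadj _ ih => exact (quotientGraph_reachable_mk_of_adj H ρ hadj).trans ih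

theorem quotientGraph_connected_s8 (hH : H.Connected) : (quotientGraph H ρ).Connected :=
  have : Nonempty (Quotient ρ) := hH.nonempty.map (Quotient.mk ρ)
  ⟨fun B B' => Quotient.inductionOn₂ B B' fun x y => quotientGraph_reachable_mk H ρ (hH x y)⟩

theorem quotientGraph_edgeSet_subset :
    (quotientGraph H ρ).edgeSet ⊆ Sym2.map (Quotient.mk ρ) '' H.edgeSet := by
  intro e he
  induction e using Sym2.ind with
  | _ B B' =>
    obtain ⟨-, x, y, rfl, rfl, hxy⟩ := he
    exact ⟨s(x, y), hxy, rfl⟩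

theorem quotientGraph_card_edgeSet_lt [Finite V]
    (h : ¬ Set.InjOn (Sym2.map (Quotient.mk ρ)) H.edgeSet) :
    Nat.card (quotientGraph H ρ).edgeSet < Nat.card H.edgeSet := by
  rw [Nat.card_coe_set_eq, Nat.card_coe_set_eq]
  calc (quotientGraph H ρ).edgeSet.ncard
      ≤ (Sym2.map (Quotient.mk ρ) '' H.edgeSet).ncard :=
        Set.ncard_le_ncard (quotientGraph_edgeSet_subset H ρ)
    _ < H.edgeSet.ncard := Set.ncard_image_lt_of_not_injOn (Set.toFinite _) h

end QuotientGraph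

/-- **Contracting two vertices of a tree with a common neighbor yields a tree.**
Let `T` be a finite tree, `u ≠ w` two vertices with a common neighbor in `T`, and `ρ`
the partition of `V(T)` whose blocks are `{u, w}` and the singletons of all other
vertices. Then `T/ρ` is a tree. -/
theorem contract_common_neighbor_pair_isTree {V : Type} [Fintype V]
    (T : SimpleGraph V) (hT : T.IsTree) (u w : V) (huw : u ≠ w)
    (hcommon : ∃ v : V, T.Adj u v ∧ T.Adj w v)
    (ρ : Setoid V)
    (hρ : ∀ x y : V, ρ.r x y ↔
      (x = y ∨ (x ∈ ({u, w} : Set V) ∧ y ∈ ({u, w} : Set V)))) :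
    (quotientGraph T ρ).IsTree := by
  obtain ⟨v, huv, hwv⟩ := hcommon
  have hmk : Quotient.mk ρ u = Quotient.mk ρ w :=
    Quotient.sound ((hρ u w).2 (Or.inr ⟨by simp, by simp⟩))
  have hedges : Nat.card (quotientGraph T ρ).edgeSet < Nat.card T.edgeSet := by
    refine quotientGraph_card_edgeSet_lt T ρ fun hinj => ?_
    have huv_wv : s(u, v) = s(w, v) := hinj huv hwv (by simp [hmk])
    rcases Sym2.eq_iff.1 huv_wv with ⟨h, -⟩ | ⟨h, -⟩
    exacts [huw h, huv.ne h]
  have hverts : Nat.card V ≤ Nat.card (Quotient ρ) + 1 := by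
    refine Nat.card_le_card_add_one_of_injOn_compl_singleton (f := Quotient.mk ρ) (a := w)
      fun x hx y hy hxy => ?_
    rcases (hρ x y).1 (Quotient.exact hxy) with h | ⟨hx', hy'⟩
    · exact h
    · simp_all
  have hcard := (SimpleGraph.isTree_iff_connected_and_card.1 hT).2
  exact (quotientGraph_connected_s8 T ρ hT.connected).isTree_of_card_edgeSet_add_one_le (by omega)
end

section
/- Let T₁ and T₂ be finite trees and let φ be a locally injective homomorphism from T₁ to T₂. Then φ is injective. -/
/-!
Along a path in `T₁` consecutive edges are distinct, and local injectivity at the shared vertex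
keeps their images distinct. In the tree `T₂` a walk without backtracking is a path, so a path
in `T₁` between two vertices with the same image is mapped to a closed path, which is trivial.
-/

open SimpleGraph

namespace SimpleGraph.Walk

variable {V W : Type*} {G : SimpleGraph V} {G' : SimpleGraph W}

theorem isChain_ne_edges_map {φ : G →g G'} (hφ : ∀ v, Set.InjOn φ (G.neighborSet v)) :
    ∀ {u v : V} (p : G.Walk u v), p.edges.IsChain (· ≠ ·) →
      (p.map φ).edges.IsChain (· ≠ ·)
  | _, _, nil, _ => by simp
  | _, _, cons _ nil, _ => by simp
  | _, _, cons (v := b) hab (cons (v := c) hbc p), hp => by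
    rw [edges_cons, edges_cons, List.isChain_cons_cons] at hp
    have hac : _ ≠ c := fun h => hp.1 (h ▸ Sym2.eq_swap)
    have hφac : φ _ ≠ φ c := fun h => hac (hφ b hab.symm hbc h)
    rw [map_cons, map_cons, edges_cons, edges_cons, List.isChain_cons_cons]
    refine ⟨fun h => hφac ?_, ?_⟩
    · rwa [Sym2.eq_swap, Sym2.congr_right] at h
    · simpa using isChain_ne_edges_map hφ (cons hbc p) (by simpa using hp.2)

theorem IsPath.map_of_isAcyclic (hG' : G'.IsAcyclic) {φ : G →g G'}
    (hφ : ∀ v, Set.InjOn φ (G.neighborSet v)) {u v : V} {p : G.Walk u v} (hp : p.IsPath) :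
    (p.map φ).IsPath :=
  (hG'.isPath_iff_isChain _).2 <|
    isChain_ne_edges_map hφ p ((edges_nodup_of_support_nodup hp.support_nodup).isChain)

end SimpleGraph.Walk

theorem locallyInjective_hom_between_trees_injective_general {V W : Type}
    (T₁ : SimpleGraph V) (T₂ : SimpleGraph W) (h₁ : T₁.IsTree) (h₂ : T₂.IsTree)
    (φ : T₁ →g T₂) (hloc : ∀ v : V, Set.InjOn φ (T₁.neighborSet v)) :
    Function.Injective φ := by
  classical
  intro a b hab
  obtain ⟨p, hp⟩ := (h₁.connected.preconnected a b).some.toPath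
  have hclosed : ((p.map φ).copy rfl hab.symm).IsPath := by
    rw [Walk.isPath_copy]
    exact hp.map_of_isAcyclic h₂.isAcyclic hloc
  have hnil : p.Nil := by simpa using Walk.isPath_iff_nil.1 hclosed
  exact hnil.eq

/-- **A locally injective homomorphism between trees is injective.**
If `T₁` and `T₂` are finite trees and `φ : T₁ → T₂` is a homomorphism that is injective
on the neighborhood of every vertex, then `φ` is injective. -/
theorem locallyInjective_hom_between_trees_injective {V W : Type} [Fintype V] [Fintype W]
    (T₁ : SimpleGraph V) (T₂ : SimpleGraph W) (h₁ : T₁.IsTree) (h₂ : T₂.IsTree)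
    (φ : T₁ →g T₂) (hloc : ∀ v : V, Set.InjOn φ (T₁.neighborSet v)) :
    Function.Injective φ :=
  locallyInjective_hom_between_trees_injective_general T₁ T₂ h₁ h₂ φ hloc
end

section
/- Let n ≥ 5 and let A be an n×n matrix with entries in {0,1}. Then the permanent of A equals the number of subgraphs of T_A that are isomorphic to T_{I_n}, where I_n is the n×n identity matrix. -/
/-- The raw vertex names for the tree `T_A`: the root `r`; `u j, w j, x j, y j, z j` for
`j ∈ [n]`; `v i j` for `i, j ∈ [n]`; and candidate vertices `b i j`. -/
inductive TVertBase (n : ℕ) : Type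
  | r : TVertBase n
  | u : Fin n → TVertBase n
  | w : Fin n → TVertBase n
  | x : Fin n → TVertBase n
  | y : Fin n → TVertBase n
  | z : Fin n → TVertBase n
  | v : Fin n → Fin n → TVertBase n
  | b : Fin n → Fin n → TVertBase n
  deriving DecidableEq, Fintype

/-- The (oriented) edges of `T_A`: `{v i j, v (i+1) j}`, `{b i j, v i j}`,
`{u j, v 1 j}`, `{v n j, w j}`, `{w j, x j}`, `{w j, y j}`, `{w j, z j}`, `{r, u j}`
(indices written 1-based in the paper, 0-based here). -/
inductive TAdjBase (n : ℕ) : TVertBase n → TVertBase n → Prop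
  | vv (i i' j : Fin n) : i.val + 1 = i'.val → TAdjBase n (.v i j) (.v i' j)
  | bv (i j : Fin n) : TAdjBase n (.b i j) (.v i j)
  | uv (j i : Fin n) : i.val = 0 → TAdjBase n (.u j) (.v i j)
  | vw (i j : Fin n) : i.val = n - 1 → TAdjBase n (.v i j) (.w j)
  | wx (j : Fin n) : TAdjBase n (.w j) (.x j)
  | wy (j : Fin n) : TAdjBase n (.w j) (.y j)
  | wz (j : Fin n) : TAdjBase n (.w j) (.z j)
  | ru (j : Fin n) : TAdjBase n .r (.u j)

/-- The vertex set of `T_A`: all raw vertices, except that `b i j` is present only when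
`A i j = 1`. -/
def TVert {n : ℕ} (A : Matrix (Fin n) (Fin n) ℕ) : Type :=
  {t : TVertBase n // ∀ i j : Fin n, t = .b i j → A i j = 1}

/-- The graph `T_A` associated with a 0/1 matrix `A`. -/
def TGraph {n : ℕ} (A : Matrix (Fin n) (Fin n) ℕ) : SimpleGraph (TVert A) where
  Adj s t := TAdjBase n s.1 t.1 ∨ TAdjBase n t.1 s.1
  symm := ⟨fun _ _ h => Or.symm h⟩
  loopless := ⟨by
    rintro ⟨t, ht⟩ (h | h) <;> cases h <;> omega⟩

/-!
A copy of `T_{I_n}` inside `T_A` is rigid. Its root has degree `n ≥ 5`, while every other vertex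
of `T_A` has degree at most 4, so the root goes to the root and the `u_j` go to the `u_{π j}` for a
permutation `π`. Each path `u_j, v_{1,j}, …, v_{n,j}, w_j` then goes onto the path of column `π j`:
a step back is excluded by injectivity, and a step onto a leaf `b` is excluded because inner path
vertices have two neighbours. Finally `b_{i,i}` goes to `b_{i,π i}`, so `A_{i,π i} = 1`, and the
copy lies in the subtree of `T_A` obtained by deleting the `b_{i,j}` with `j ≠ π i`. That subtree
is itself isomorphic to `T_{I_n}`, so by counting vertices and edges the copy is all of it. Thus
the copies correspond to the permutations counted by the permanent of the 0/1 matrix `A`.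
-/

namespace SimpleGraph

variable {V W : Type*} {G : SimpleGraph V} {H : SimpleGraph W}

theorem Copy.eq_of_adj_of_adj (f : G.Copy H) {p q₁ q₂ : V}
    (hp : (H.neighborSet (f p)).Subsingleton) (h₁ : G.Adj p q₁) (h₂ : G.Adj p q₂) : q₁ = q₂ :=
  f.injective (hp (f.toHom.map_adj h₁) (f.toHom.map_adj h₂))

theorem Copy.ncard_neighborSet_le (f : G.Copy H) (v : V) (hfin : (H.neighborSet (f v)).Finite) :
    (G.neighborSet v).ncard ≤ (H.neighborSet (f v)).ncard :=
  Set.ncard_le_ncard_of_injOn f (fun _ h => f.toHom.map_adj h) f.injective.injOn hfin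

theorem Subgraph.ncard_edgeSet_coe (G' : G.Subgraph) : G'.coe.edgeSet.ncard = G'.edgeSet.ncard := by
  rw [← image_coe_edgeSet_coe]
  exact (Set.ncard_image_of_injective _ (Sym2.map.injective Subtype.val_injective)).symm

theorem Subgraph.eq_of_le_of_iso [Finite V] {G₁ G₂ : G.Subgraph} (hle : G₁ ≤ G₂)
    (e : G₁.coe ≃g G₂.coe) : G₁ = G₂ := by
  have hverts : G₁.verts = G₂.verts := by
    refine Set.eq_of_subset_of_ncard_le hle.1 (le_of_eq ?_)
    rw [← Nat.card_coe_set_eq, ← Nat.card_coe_set_eq]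
    exact (Nat.card_congr e.toEquiv).symm
  have hedges : G₁.edgeSet = G₂.edgeSet := by
    refine Set.eq_of_subset_of_ncard_le (edgeSet_mono hle) (le_of_eq ?_)
    rw [← ncard_edgeSet_coe, ← ncard_edgeSet_coe, ← Nat.card_coe_set_eq, ← Nat.card_coe_set_eq]
    exact (Nat.card_congr e.mapEdgeSet).symm
  refine le_antisymm hle ⟨hverts.ge, fun a b h => ?_⟩
  rw [← Subgraph.mem_edgeSet, hedges]
  exact h

end SimpleGraph

theorem Matrix.sum_prod_perm_eq_card {ι : Type*} [Fintype ι] [DecidableEq ι]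
    {A : Matrix ι ι ℕ} (hA : ∀ i j, A i j = 0 ∨ A i j = 1) :
    ∑ π : Equiv.Perm ι, ∏ i, A i (π i) = Nat.card {π : Equiv.Perm ι // ∀ i, A i (π i) = 1} := by
  have hboole : ∀ i j, A i j = if A i j = 1 then 1 else 0 := fun i j => by
    rcases hA i j with h | h <;> simp [h]
  conv_lhs => enter [2, π, 2, i]; rw [hboole]
  simp only [Fintype.prod_boole, Finset.sum_boole, Nat.card_eq_fintype_card,
    Fintype.card_subtype, Nat.cast_id]

namespace TVertBase

variable {n : ℕ}

def mapCol (σ : Fin n → Fin n) : TVertBase n → TVertBase n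
  | r => r
  | u j => u (σ j)
  | w j => w (σ j)
  | x j => x (σ j)
  | y j => y (σ j)
  | z j => z (σ j)
  | v i j => v i (σ j)
  | b i j => b i (σ j)

theorem mapCol_mapCol (σ τ : Fin n → Fin n) (t : TVertBase n) :
    mapCol σ (mapCol τ t) = mapCol (σ ∘ τ) t := by
  cases t <;> rfl

theorem mapCol_id (t : TVertBase n) : mapCol id t = t := by
  cases t <;> rfl

theorem mapCol_perm_symm (π : Equiv.Perm (Fin n)) (t : TVertBase n) :
    mapCol π (mapCol π.symm t) = t := by
  rw [mapCol_mapCol, Equiv.self_comp_symm, mapCol_id]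

theorem mapCol_symm_perm (π : Equiv.Perm (Fin n)) (t : TVertBase n) :
    mapCol π.symm (mapCol π t) = t := by
  rw [mapCol_mapCol, Equiv.symm_comp_self, mapCol_id]

def permVerts (π : Equiv.Perm (Fin n)) : Set (TVertBase n) := {t | ∀ i j, t = b i j → π i = j}

theorem mapCol_mem_permVerts_iff (π : Equiv.Perm (Fin n)) (t : TVertBase n) :
    mapCol π t ∈ permVerts π ↔ ∀ i j, t = b i j → (1 : Matrix (Fin n) (Fin n) ℕ) i j = 1 := by
  cases t <;> simp [mapCol, permVerts, Matrix.one_apply]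

end TVertBase

theorem TAdjBase.mapCol {n : ℕ} (σ : Fin n → Fin n) {s t : TVertBase n} (h : TAdjBase n s t) :
    TAdjBase n (s.mapCol σ) (t.mapCol σ) := by
  cases h with
  | vv i i' j h => exact .vv i i' (σ j) h
  | bv i j => exact .bv i (σ j)
  | uv j i h => exact .uv (σ j) i h
  | vw i j h => exact .vw i (σ j) h
  | wx j => exact .wx (σ j)
  | wy j => exact .wy (σ j)
  | wz j => exact .wz (σ j)
  | ru j => exact .ru (σ j)

/-- `T_A` for the all-ones matrix: every `TGraph A` is an induced subgraph of it. -/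
def TGraphBase (n : ℕ) : SimpleGraph (TVertBase n) where
  Adj s t := TAdjBase n s t ∨ TAdjBase n t s
  symm := ⟨fun _ _ h => Or.symm h⟩
  loopless := ⟨by rintro t (h | h) <;> cases h <;> omega⟩

namespace TGraphBase

open TVertBase

variable {n : ℕ} {s t : TVertBase n}

theorem adj_mapCol_iff (π : Equiv.Perm (Fin n)) :
    (TGraphBase n).Adj (s.mapCol π) (t.mapCol π) ↔ (TGraphBase n).Adj s t := by
  refine ⟨fun h => ?_, Or.imp (TAdjBase.mapCol π) (TAdjBase.mapCol π)⟩
  rw [← mapCol_symm_perm π s, ← mapCol_symm_perm π t]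
  exact h.imp (TAdjBase.mapCol π.symm) (TAdjBase.mapCol π.symm)

theorem exists_eq_u_of_adj_r (h : (TGraphBase n).Adj r t) : ∃ j, t = u j := by
  rcases h with h | h <;> cases h
  exact ⟨_, rfl⟩

theorem adj_u {j : Fin n} (h : (TGraphBase n).Adj (u j) t) :
    t = r ∨ ∃ i : Fin n, i.val = 0 ∧ t = v i j := by
  rcases h with h | h <;> cases h
  · exact .inr ⟨_, ‹_›, rfl⟩
  · exact .inl rfl

theorem adj_v {i j : Fin n} (h : (TGraphBase n).Adj (v i j) t) :
    t = b i j ∨ (∃ i' : Fin n, (i'.val + 1 = i.val ∨ i.val + 1 = i'.val) ∧ t = v i' j) ∨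
      (i.val = 0 ∧ t = u j) ∨ (i.val = n - 1 ∧ t = w j) := by
  rcases h with h | h <;> cases h
  · exact .inr (.inl ⟨_, .inr ‹_›, rfl⟩)
  · exact .inr (.inr (.inr ⟨‹_›, rfl⟩))
  · exact .inr (.inl ⟨_, .inl ‹_›, rfl⟩)
  · exact .inl rfl
  · exact .inr (.inr (.inl ⟨‹_›, rfl⟩))

theorem eq_v_of_adj_b {i j : Fin n} (h : (TGraphBase n).Adj (b i j) t) : t = v i j := by
  rcases h with h | h <;> cases h
  rfl

theorem neighborSet_b_subsingleton (i j : Fin n) :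
    ((TGraphBase n).neighborSet (b i j)).Subsingleton :=
  fun _ h₁ _ h₂ => (eq_v_of_adj_b h₁).trans (eq_v_of_adj_b h₂).symm

theorem ncard_neighborSet_le_four (hn : 2 ≤ n) (ht : t ≠ r) :
    ((TGraphBase n).neighborSet t).ncard ≤ 4 := by
  suffices ∃ a b c d : TVertBase n, (TGraphBase n).neighborSet t ⊆ ({a, b, c, d} : Finset _) by
    obtain ⟨a, b, c, d, h⟩ := this
    exact (Set.ncard_le_ncard h (Finset.finite_toSet _)).trans
      ((Set.ncard_coe_finset _).trans_le Finset.card_le_four)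
  cases t with
  | r => exact absurd rfl ht
  | u j => exact ⟨r, v ⟨0, by omega⟩ j, r, r, fun t' h => by
      rcases h with h | h <;> cases h <;> simp_all [Fin.ext_iff]⟩
  | v i j => exact ⟨b i j, v ⟨i - 1, by omega⟩ j, v ⟨min (i + 1) (n - 1), by omega⟩ j,
      if i.val = 0 then u j else w j, fun t' h => by
      rcases h with h | h <;> cases h <;> simp_all [Fin.ext_iff] <;> omega⟩
  | w j => exact ⟨x j, y j, z j, v ⟨n - 1, by omega⟩ j, fun t' h => by
      rcases h with h | h <;> cases h <;> simp_all [Fin.ext_iff]⟩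
  | x j | y j | z j => exact ⟨w j, w j, w j, w j, fun t' h => by
      rcases h with h | h <;> cases h; simp⟩
  | b i j => exact ⟨v i j, v i j, v i j, v i j, fun t' h => by simp [eq_v_of_adj_b h]⟩

end TGraphBase

namespace TVert

variable {n : ℕ} {A : Matrix (Fin n) (Fin n) ℕ}

instance : Finite (TVert A) := Subtype.finite

def r : TVert A := ⟨.r, by rintro _ _ ⟨⟩⟩

def u (j : Fin n) : TVert A := ⟨.u j, by rintro _ _ ⟨⟩⟩

def v (i j : Fin n) : TVert A := ⟨.v i j, by rintro _ _ ⟨⟩⟩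

def w (j : Fin n) : TVert A := ⟨.w j, by rintro _ _ ⟨⟩⟩

def x (j : Fin n) : TVert A := ⟨.x j, by rintro _ _ ⟨⟩⟩

@[simp] theorem val_r : (r : TVert A).1 = .r := rfl

@[simp] theorem val_u (j : Fin n) : (u j : TVert A).1 = .u j := rfl

@[simp] theorem val_v (i j : Fin n) : (v i j : TVert A).1 = .v i j := rfl

@[simp] theorem val_w (j : Fin n) : (w j : TVert A).1 = .w j := rfl

@[simp] theorem val_x (j : Fin n) : (x j : TVert A).1 = .x j := rfl

def bDiag (i : Fin n) : TVert (1 : Matrix (Fin n) (Fin n) ℕ) :=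
  ⟨.b i i, by rintro _ _ ⟨⟩; exact Matrix.one_apply_eq i⟩

@[simp] theorem val_bDiag (i : Fin n) : (bDiag i).1 = .b i i := rfl

def valCopy (A : Matrix (Fin n) (Fin n) ℕ) : (TGraph A).Copy (TGraphBase n) :=
  ⟨⟨Subtype.val, id⟩, Subtype.val_injective⟩

theorem exists_adj_v_succ_ne_v {k : ℕ} (hk : k + 1 < n) (j : Fin n) :
    ∃ q, (TGraph A).Adj (v ⟨k + 1, hk⟩ j) q ∧ v ⟨k, by omega⟩ j ≠ q := by
  by_cases hk' : k + 2 < n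
  · exact ⟨v ⟨k + 2, hk'⟩ j, .inl (.vv _ _ j rfl), fun h => by simpa using congrArg Subtype.val h⟩
  · exact ⟨w j, .inl (.vw _ j (by simp only; omega)),
      fun h => by simpa using congrArg Subtype.val h⟩

end TVert

open TVertBase

variable {n : ℕ}

def permSubtree (A : Matrix (Fin n) (Fin n) ℕ) (π : Equiv.Perm (Fin n)) : (TGraph A).Subgraph :=
  (⊤ : (TGraph A).Subgraph).induce {t | t.1 ∈ permVerts π}

def permSubtreeIso {A : Matrix (Fin n) (Fin n) ℕ} {π : Equiv.Perm (Fin n)}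
    (hπ : ∀ i, A i (π i) = 1) :
    (permSubtree A π).coe ≃g TGraph (1 : Matrix (Fin n) (Fin n) ℕ) where
  toFun t := ⟨t.1.1.mapCol π.symm,
    (mapCol_mem_permVerts_iff π _).1 ((mapCol_perm_symm π t.1.1).symm ▸ t.2)⟩
  invFun t :=
    have ht : t.1.mapCol π ∈ permVerts π := (mapCol_mem_permVerts_iff π _).2 t.2
    ⟨⟨t.1.mapCol π, fun i j h => ht i j h ▸ hπ i⟩, ht⟩
  left_inv _ := Subtype.ext (Subtype.ext (mapCol_perm_symm π _))
  right_inv _ := Subtype.ext (mapCol_symm_perm π _)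
  map_rel_iff' {s t} :=
    (TGraphBase.adj_mapCol_iff π.symm).trans ⟨fun h => ⟨s.2, t.2, h⟩, fun h => h.2.2⟩

section Rigidity

variable (g : (TGraph (1 : Matrix (Fin n) (Fin n) ℕ)).Copy (TGraphBase n))

theorem copy_adj_of_tAdjBase (p q : TVert (1 : Matrix (Fin n) (Fin n) ℕ)) (h : TAdjBase n p.1 q.1) :
    (TGraphBase n).Adj (g p) (g q) :=
  g.toHom.map_adj (.inl h)

theorem val_eq_of_copy_eq {p q : TVert (1 : Matrix (Fin n) (Fin n) ℕ)} (h : g p = g q) :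
    p.1 = q.1 :=
  congrArg Subtype.val (g.injective h)

theorem copy_apply_ne_b {p q₁ q₂ : TVert (1 : Matrix (Fin n) (Fin n) ℕ)}
    (h₁ : (TGraph 1).Adj p q₁) (h₂ : (TGraph 1).Adj p q₂) (hq : q₁ ≠ q₂) (i j : Fin n) :
    g p ≠ .b i j := fun h =>
  hq (g.eq_of_adj_of_adj (by rw [h]; exact TGraphBase.neighborSet_b_subsingleton i j) h₁ h₂)

theorem copy_apply_r (hn : 5 ≤ n) : g TVert.r = .r := by
  by_contra hne
  have hdeg : n ≤ ((TGraph (1 : Matrix (Fin n) (Fin n) ℕ)).neighborSet TVert.r).ncard := by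
    simpa using Set.ncard_le_ncard_of_injOn (s := Set.univ) TVert.u (fun j _ => .inl (.ru j))
      (fun j _ k _ h => by simpa using congrArg Subtype.val h) (Set.toFinite _)
  have := g.ncard_neighborSet_le TVert.r (Set.toFinite _)
  have := TGraphBase.ncard_neighborSet_le_four (by omega) hne
  omega

theorem exists_perm_copy_apply_u (hr : g TVert.r = .r) :
    ∃ ρ : Equiv.Perm (Fin n), ∀ j, g (TVert.u j) = .u (ρ j) := by
  choose ρ hρ using fun j =>
    TGraphBase.exists_eq_u_of_adj_r (hr ▸ copy_adj_of_tAdjBase g TVert.r (TVert.u j) (.ru j))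
  have hinj : Function.Injective ρ := fun j k h => by
    simpa using val_eq_of_copy_eq g ((hρ j).trans ((congrArg _ h).trans (hρ k).symm))
  exact ⟨.ofBijective ρ hinj.bijective_of_finite, hρ⟩

variable {g} {ρ : Fin n → Fin n}

theorem copy_apply_v (hr : g TVert.r = .r) (hu : ∀ j, g (TVert.u j) = .u (ρ j)) (i j : Fin n) :
    g (TVert.v i j) = .v i (ρ j) := by
  suffices ∀ k (hk : k < n), g (TVert.v ⟨k, hk⟩ j) = .v ⟨k, hk⟩ (ρ j) from this i i.2
  intro k
  induction k using Nat.strong_induction_on with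
  | _ k ih =>
  intro hk
  rcases k with _ | k
  · have h := copy_adj_of_tAdjBase g (TVert.u j) (TVert.v ⟨0, hk⟩ j) (.uv j _ rfl)
    rw [hu j] at h
    rcases TGraphBase.adj_u h with h | ⟨i', hi', h⟩
    · simpa using val_eq_of_copy_eq g (h.trans hr.symm)
    · rw [h, show i' = ⟨0, hk⟩ from Fin.ext hi']
  have hprev := ih k (by omega) (by omega)
  have h :=
    copy_adj_of_tAdjBase g (TVert.v ⟨k, by omega⟩ j) (TVert.v ⟨k + 1, hk⟩ j) (.vv _ _ j rfl)
  rw [hprev] at h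
  rcases TGraphBase.adj_v h with h | ⟨i', hi' | hi', h⟩ | ⟨-, h⟩ | ⟨h0, -⟩
  · obtain ⟨q, hq, hne⟩ := TVert.exists_adj_v_succ_ne_v (A := 1) hk j
    exact (copy_apply_ne_b g (.inr (.vv _ _ j rfl)) hq hne _ _ h).elim
  · have hi' : i'.val + 1 = k := hi'
    have := val_eq_of_copy_eq g (h.trans (ih i' (by omega) i'.2).symm)
    simp [Fin.ext_iff] at this
    omega
  · rw [h, show i' = ⟨k + 1, hk⟩ from Fin.ext hi'.symm]
  · simpa using val_eq_of_copy_eq g (h.trans (hu j).symm)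
  · have h0 : k = n - 1 := h0
    omega

theorem copy_apply_w (hu : ∀ j, g (TVert.u j) = .u (ρ j))
    (hv : ∀ i j, g (TVert.v i j) = .v i (ρ j)) (j : Fin n) : g (TVert.w j) = .w (ρ j) := by
  have hn : n - 1 < n := by have := j.2; omega
  have h := copy_adj_of_tAdjBase g (TVert.v ⟨n - 1, hn⟩ j) (TVert.w j) (.vw _ j rfl)
  rw [hv] at h
  rcases TGraphBase.adj_v h with h | ⟨i', hi' | hi', h⟩ | ⟨-, h⟩ | ⟨-, h⟩
  · have hv' : (TGraph 1).Adj (TVert.w j) (TVert.v ⟨n - 1, hn⟩ j) := .inr (.vw _ j rfl)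
    have hx : (TGraph 1).Adj (TVert.w j) (TVert.x j) := .inl (.wx j)
    exact (copy_apply_ne_b g hv' hx (fun h => by simpa using congrArg Subtype.val h) _ _ h).elim
  · simpa using val_eq_of_copy_eq g (h.trans (hv i' j).symm)
  · have hi' : n - 1 + 1 = i'.val := hi'
    omega
  · simpa using val_eq_of_copy_eq g (h.trans (hu j).symm)
  · exact h

theorem copy_apply_bDiag (hu : ∀ j, g (TVert.u j) = .u (ρ j))
    (hv : ∀ i j, g (TVert.v i j) = .v i (ρ j)) (hw : ∀ j, g (TVert.w j) = .w (ρ j)) (i : Fin n) :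
    g (TVert.bDiag i) = .b i (ρ i) := by
  have h := copy_adj_of_tAdjBase g (TVert.bDiag i) (TVert.v i i) (.bv i i)
  rw [hv] at h
  rcases TGraphBase.adj_v h.symm with h | ⟨i', -, h⟩ | ⟨-, h⟩ | ⟨-, h⟩
  · exact h
  · simpa using val_eq_of_copy_eq g (h.trans (hv i' i).symm)
  · simpa using val_eq_of_copy_eq g (h.trans (hu i).symm)
  · simpa using val_eq_of_copy_eq g (h.trans (hw i).symm)

variable (g) in
theorem exists_perm_of_copy (hn : 5 ≤ n) :
    ∃ π : Equiv.Perm (Fin n), (∀ i, g (TVert.bDiag i) = .b i (π i)) ∧ ∀ p, g p ∈ permVerts π := by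
  have hr := copy_apply_r g hn
  obtain ⟨π, hu⟩ := exists_perm_copy_apply_u g hr
  have hv := copy_apply_v hr hu
  have hw := copy_apply_w hu hv
  have hb := copy_apply_bDiag hu hv hw
  refine ⟨π, hb, fun ⟨t, ht⟩ i j h => ?_⟩
  cases t with
  | r => cases hr.symm.trans h
  | u k => cases (hu k).symm.trans h
  | v i' k => cases (hv i' k).symm.trans h
  | w k => cases (hw k).symm.trans h
  | b i' k =>
    obtain rfl : i' = k := by simpa [Matrix.one_apply] using ht i' k rfl
    cases (hb i').symm.trans h
    rfl
  | x k | y k | z k =>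
    have hadj := copy_adj_of_tAdjBase g (TVert.w k) ⟨_, ht⟩ (by constructor)
    rw [h, hw] at hadj
    cases TGraphBase.eq_v_of_adj_b hadj.symm

end Rigidity

theorem permSubtree_injective {A : Matrix (Fin n) (Fin n) ℕ} {π σ : Equiv.Perm (Fin n)}
    (hπ : ∀ i, A i (π i) = 1) (h : permSubtree A π = permSubtree A σ) : π = σ := by
  refine Equiv.ext fun i => ?_
  have hmem : (⟨.b i (π i), fun _ _ e => by cases e; exact hπ i⟩ : TVert A) ∈
      (permSubtree A π).verts := fun _ _ e => by cases e; rfl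
  rw [h] at hmem
  exact (hmem i (π i) rfl).symm

theorem exists_eq_permSubtree (hn : 5 ≤ n) {A : Matrix (Fin n) (Fin n) ℕ} (S : (TGraph A).Subgraph)
    (φ : S.coe ≃g TGraph (1 : Matrix (Fin n) (Fin n) ℕ)) :
    ∃ π : Equiv.Perm (Fin n), (∀ i, A i (π i) = 1) ∧ S = permSubtree A π := by
  let g := (TVert.valCopy A).comp (S.coeCopy.comp φ.symm.toCopy)
  obtain ⟨π, hb, hmem⟩ := exists_perm_of_copy g hn
  have hπ : ∀ i, A i (π i) = 1 := fun i => (φ.symm (TVert.bDiag i)).1.2 i (π i) (hb i)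
  have hverts : S.verts ⊆ {t | t.1 ∈ permVerts π} := fun a ha => by
    have := hmem (φ ⟨a, ha⟩)
    simp only [g, SimpleGraph.Copy.comp_apply] at this
    rw [show φ.symm.toCopy (φ ⟨a, ha⟩) = ⟨a, ha⟩ from φ.symm_apply_apply _] at this
    exact this
  have hle : S ≤ permSubtree A π :=
    SimpleGraph.Subgraph.le_induce_top_verts.trans (SimpleGraph.Subgraph.induce_mono_right hverts)
  exact ⟨π, hπ, S.eq_of_le_of_iso hle (φ.trans (permSubtreeIso hπ).symm)⟩

/-- **The permanent counts subtrees.** Let `n ≥ 5` and let `A` be an `n × n` matrix with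
entries in `{0, 1}`. Then the permanent of `A` equals the number of subgraphs of `T_A`
that are isomorphic to `T_{I_n}`, where `I_n` is the `n × n` identity matrix. -/
theorem permanent_eq_card_subtrees {n : ℕ} (hn : 5 ≤ n) (A : Matrix (Fin n) (Fin n) ℕ)
    (hA : ∀ i j : Fin n, A i j = 0 ∨ A i j = 1) :
    (∑ π : Equiv.Perm (Fin n), ∏ i : Fin n, A i (π i)) =
      Nat.card {S : (TGraph A).Subgraph //
        Nonempty (S.coe ≃g TGraph (1 : Matrix (Fin n) (Fin n) ℕ))} := by
  rw [Matrix.sum_prod_perm_eq_card hA]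
  refine Nat.card_eq_of_bijective (fun π => ⟨permSubtree A π, ⟨permSubtreeIso π.2⟩⟩) ⟨?_, ?_⟩
  · rintro ⟨π, hπ⟩ ⟨σ, _⟩ h
    exact Subtype.ext (permSubtree_injective hπ (congrArg Subtype.val h))
  · rintro ⟨S, ⟨φ⟩⟩
    obtain ⟨π, hπ, rfl⟩ := exists_eq_permSubtree hn S φ
    exact ⟨⟨π, hπ⟩, rfl⟩
end

section
/- Let k ≥ 1 and let F be a finite simple graph with exactly k edges and no isolated vertices. Then there exists a partition ρ of V(W_k) such that: {a} is a block of ρ; every block of ρ induces a connected subgraph of τLi(W_k); no block of ρ contains two vertices that are adjacent in W_k; and the graph obtained from the quotient graph W_k/ρ by deleting the vertex {a} (together with all incident edges) is isomorphic to F. -/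
/-- The vertices of the windmill graph `W_k`: a hub `a` and rim vertices
`v 1, …, v k, w 1, …, w k`. -/
inductive WVert (k : ℕ) : Type
  | a : WVert k
  | v : Fin k → WVert k
  | w : Fin k → WVert k
  deriving DecidableEq

/-- The (oriented) edges of the windmill graph `W_k`: `{a, v i}`, `{v i, w i}` and
`{w i, a}` for all `i ∈ [k]`. -/
inductive WAdjBase (k : ℕ) : WVert k → WVert k → Prop
  | av (i : Fin k) : WAdjBase k .a (.v i)
  | vw (i : Fin k) : WAdjBase k (.v i) (.w i)
  | wa (i : Fin k) : WAdjBase k (.w i) .a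

/-- The windmill graph `W_k`. -/
def WGraph (k : ℕ) : SimpleGraph (WVert k) where
  Adj s t := WAdjBase k s t ∨ WAdjBase k t s
  symm := ⟨fun _ _ h => Or.symm h⟩
  loopless := ⟨by rintro t (h | h) <;> cases h⟩

/-! Enumerate the edges of `F` as `{x i, y i}` and label the windmill by `v i ↦ x i`,
`w i ↦ y i`, `a ↦ none`; `ρ` is the kernel of this labelling. Any two rim vertices have the
common neighbour `a`, so every block other than `{a}` is a clique of `τLi(W_k)`; a block never
contains a spoke, nor a rim edge `v i w i` since `x i ≠ y i`. In the quotient the rim edge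
`v i w i` becomes the edge `x i y i` of `F`, and since `F` has no isolated vertices every
vertex of `F` occurs as a label. -/

open SimpleGraph

theorem SimpleGraph.IsClique.induce_connected {V : Type*} {G : SimpleGraph V} {s : Set V}
    (h : G.IsClique s) (hs : s.Nonempty) : (G.induce s).Connected := by
  have := hs.to_subtype
  rw [induce_eq_top.mpr h]
  exact connected_top

theorem SimpleGraph.exists_edge_enumeration {V : Type*} [Finite V] (G : SimpleGraph V) {k : ℕ}
    (hk : Nat.card G.edgeSet = k) :
    ∃ p : Fin k → V × V, ∀ x y, G.Adj x y ↔ ∃ i, s((p i).1, (p i).2) = s(x, y) := by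
  subst hk
  let e := Finite.equivFin G.edgeSet
  refine ⟨fun i => (e.symm i : Sym2 V).out, fun x y => ⟨fun h => ⟨e ⟨s(x, y), h⟩, ?_⟩, ?_⟩⟩
  · simp only [Equiv.symm_apply_apply]
    exact Quot.out_eq _
  · rintro ⟨i, hi⟩
    rw [← mem_edgeSet, ← hi]
    convert (e.symm i).2
    exact Quot.out_eq _

theorem nonempty_iso_induce_quotientGraph_ker {V : Type} {W : Type*} (H : SimpleGraph V)
    (F : SimpleGraph W) (f : V → Option W) (a : V) (ha : f a = none)
    (hsurj : ∀ x, ∃ u, f u = some x)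
    (hadj : ∀ x y, F.Adj x y ↔ ∃ u v, f u = some x ∧ f v = some y ∧ H.Adj u v) :
    Nonempty (F ≃g (quotientGraph H (Setoid.ker f)).induce
      {B | B ≠ Quotient.mk (Setoid.ker f) a}) := by
  choose r hr using hsurj
  have mk_eq_iff : ∀ u v, Quotient.mk (Setoid.ker f) u = Quotient.mk _ v ↔ f u = f v :=
    fun _ _ => Quotient.eq.trans Setoid.ker_def
  let θ : W → {B | B ≠ Quotient.mk (Setoid.ker f) a} :=
    fun x => ⟨Quotient.mk _ (r x), by simp [mk_eq_iff, hr, ha]⟩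
  have hθ : Function.Bijective θ := by
    refine ⟨fun x y hxy => ?_, ?_⟩
    · simpa [θ, mk_eq_iff, hr] using hxy
    · rintro ⟨B, hB⟩
      induction B using Quotient.ind with | _ u => ?_
      obtain ⟨x, hx⟩ := Option.ne_none_iff_exists'.mp (by simpa [mk_eq_iff, ha] using hB)
      exact ⟨x, Subtype.ext ((mk_eq_iff _ _).mpr (by rw [hr, hx]))⟩
  refine ⟨⟨Equiv.ofBijective θ hθ, fun {x y} => ?_⟩⟩
  simp only [Equiv.ofBijective_apply, comap_adj, Function.Embedding.subtype_apply,
    quotientGraph, θ, mk_eq_iff, hr]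
  rw [hadj, and_iff_right_of_imp]
  intro h
  rw [Ne, mk_eq_iff, hr, hr, Option.some_inj]
  exact ((hadj x y).mpr h).ne

namespace WVert

variable {k : ℕ} {V : Type*}

def label (p : Fin k → V × V) : WVert k → Option V
  | .a => none
  | .v i => some (p i).1
  | .w i => some (p i).2

variable {p : Fin k → V × V}

theorem label_eq_none_iff {u : WVert k} : label p u = none ↔ u = .a := by
  cases u <;> simp [label]

theorem wGraph_adj_a {u : WVert k} (hu : u ≠ .a) : (WGraph k).Adj u .a := by
  cases u with
  | a => exact absurd rfl hu
  | v i => exact .inr (.av i)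
  | w i => exact .inl (.wa i)

theorem isClique_tauLi_setOf_label_eq (p : Fin k → V × V) (o : Option V) :
    (tauLi (WGraph k)).IsClique {u | label p u = o} := by
  intro u hu u' hu' hne
  have h_ne_a : ∀ {u u'}, label p u = label p u' → u ≠ u' → u ≠ .a := by
    rintro u u' h hne rfl
    exact hne (label_eq_none_iff.mp h.symm).symm
  exact ⟨hne, .a, wGraph_adj_a (h_ne_a (hu.trans hu'.symm) hne),
    wGraph_adj_a (h_ne_a (hu'.trans hu.symm) hne.symm)⟩

theorem label_ne_of_adj (hp : ∀ i, (p i).1 ≠ (p i).2) {u v : WVert k}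
    (h : (WGraph k).Adj u v) : label p u ≠ label p v := by
  rcases h with h | h <;> cases h <;> simp [label, hp, (hp _).symm]

theorem exists_adj_label_iff {x y : V} :
    (∃ u v, label p u = some x ∧ label p v = some y ∧ (WGraph k).Adj u v) ↔
      ∃ i, s((p i).1, (p i).2) = s(x, y) := by
  constructor
  · rintro ⟨u, v, hu, hv, h | h⟩ <;> cases h <;> simp only [label, reduceCtorEq,
      Option.some.injEq] at hu hv
    · exact ⟨_, by rw [hu, hv]⟩
    · exact ⟨_, by rw [hu, hv, Sym2.eq_swap]⟩
  · rintro ⟨i, hi⟩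
    rcases Sym2.eq_iff.mp hi with ⟨hx, hy⟩ | ⟨hy, hx⟩
    · exact ⟨.v i, .w i, by simp [label, hx], by simp [label, hy], .inl (.vw i)⟩
    · exact ⟨.w i, .v i, by simp [label, hx], by simp [label, hy], .inr (.vw i)⟩

end WVert

theorem windmill_minor_of_graph_general {VF : Type} [Fintype VF] (k : ℕ)
    (F : SimpleGraph VF) (hedges : Nat.card F.edgeSet = k)
    (hnoiso : ∀ x : VF, ∃ y : VF, F.Adj x y) :
    ∃ ρ : Setoid (WVert k),
      ({x : WVert k | ρ.r x WVert.a} = {WVert.a}) ∧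
      (∀ v : WVert k, ((tauLi (WGraph k)).induce {u : WVert k | ρ.r u v}).Connected) ∧
      (∀ u v : WVert k, ρ.r u v → ¬ (WGraph k).Adj u v) ∧
      Nonempty
        (((quotientGraph (WGraph k) ρ).induce
            {B : Quotient ρ | B ≠ Quotient.mk ρ WVert.a}) ≃g F) := by
  obtain ⟨p, hp⟩ := F.exists_edge_enumeration hedges
  have hF : ∀ x y, F.Adj x y ↔ ∃ u v, WVert.label p u = some x ∧ WVert.label p v = some y ∧
      (WGraph k).Adj u v :=
    fun x y => (hp x y).trans WVert.exists_adj_label_iff.symm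
  have hsurj : ∀ x, ∃ u, WVert.label p u = some x := fun x => by
    obtain ⟨y, hxy⟩ := hnoiso x
    obtain ⟨u, -, hu, -⟩ := (hF x y).mp hxy
    exact ⟨u, hu⟩
  refine ⟨Setoid.ker (WVert.label p), ?_, fun v => ?_, fun u v huv hadj => ?_, ?_⟩
  · ext u
    exact Setoid.ker_def.trans WVert.label_eq_none_iff
  · exact (WVert.isClique_tauLi_setOf_label_eq p _).induce_connected ⟨v, rfl⟩
  · exact WVert.label_ne_of_adj (fun i => ((hp _ _).mpr ⟨i, rfl⟩).ne) hadj huv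
  · exact (nonempty_iso_induce_quotientGraph_ker _ F _ .a rfl hsurj hF).map Iso.symm

/-- **Every graph with `k` edges and no isolated vertices arises from the windmill
`W_k`.** Let `k ≥ 1` and let `F` be a finite simple graph with exactly `k` edges and no
isolated vertices. Then there exists a partition `ρ` of `V(W_k)` such that `{a}` is a
block of `ρ`, every block induces a connected subgraph of `τLi(W_k)`, no block contains
two vertices adjacent in `W_k`, and deleting the vertex `{a}` (with all incident edges)
from the quotient graph `W_k/ρ` yields a graph isomorphic to `F`. -/
theorem windmill_minor_of_graph {VF : Type} [Fintype VF] (k : ℕ) (hk : 1 ≤ k)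
    (F : SimpleGraph VF) (hedges : Nat.card F.edgeSet = k)
    (hnoiso : ∀ x : VF, ∃ y : VF, F.Adj x y) :
    ∃ ρ : Setoid (WVert k),
      ({x : WVert k | ρ.r x WVert.a} = {WVert.a}) ∧
      (∀ v : WVert k, ((tauLi (WGraph k)).induce {u : WVert k | ρ.r u v}).Connected) ∧
      (∀ u v : WVert k, ρ.r u v → ¬ (WGraph k).Adj u v) ∧
      Nonempty
        (((quotientGraph (WGraph k) ρ).induce
            {B : Quotient ρ | B ≠ Quotient.mk ρ WVert.a}) ≃g F) :=
  windmill_minor_of_graph_general k F hedges hnoiso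
end
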